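/- Let F be a field, λ ∈ F, and let A ∈ F^{n×n} be a singular matrix (det A = 0). Then the twisted centralizer code C_F(A,λ) contains a nonzero matrix. -/

import Mathlib

/-! A singular matrix `A` has a nonzero right null vector `v` and a nonzero left null vector `w`;
the rank-one matrix `v wᵀ` is then annihilated by `A` on both sides, so it satisfies
`A B = λ B A` for every `λ`. -/

open Matrix Module

/-- The twisted centralizer code `C_F(A,λ) = {B | A*B - λ*B*A = 0}`. -/
noncomputable def twistedCentralizer {F : Type*} [Field F] {m : Type*} [Fintype m] [DecidableEq m]
    (A : Matrix m m F) (lam : F) : Submodule F (Matrix m m F) :=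
  LinearMap.ker (LinearMap.mulLeft F A - lam • LinearMap.mulRight F A)

section TwistedCentralizer

variable {m : Type*} [Fintype m] [DecidableEq m]

theorem Matrix.exists_ne_zero_mul_eq_zero_and_mul_eq_zero {R : Type*} [CommRing R] [IsDomain R]
    {A : Matrix m m R} (h : A.det = 0) : ∃ B ≠ 0, A * B = 0 ∧ B * A = 0 := by
  obtain ⟨v, hv, hAv⟩ := exists_mulVec_eq_zero_iff.2 h
  obtain ⟨w, hw, hwA⟩ := exists_vecMul_eq_zero_iff.2 h
  refine ⟨vecMulVec v w, vecMulVec_ne_zero hv hw, ?_, ?_⟩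
  · rw [mul_vecMulVec, hAv, zero_vecMulVec]
  · rw [vecMulVec_mul, hwA, vecMulVec_zero]

variable {F : Type*} [Field F]

theorem mem_twistedCentralizer_iff {A B : Matrix m m F} {lam : F} :
    B ∈ twistedCentralizer A lam ↔ A * B = lam • (B * A) := by
  simp only [twistedCentralizer, LinearMap.mem_ker, LinearMap.sub_apply, LinearMap.smul_apply,
    LinearMap.mulLeft_apply, LinearMap.mulRight_apply, sub_eq_zero]

theorem mem_twistedCentralizer_of_mul_eq_zero {A B : Matrix m m F} (lam : F)
    (hAB : A * B = 0) (hBA : B * A = 0) : B ∈ twistedCentralizer A lam := by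
  rw [mem_twistedCentralizer_iff, hAB, hBA, smul_zero]

end TwistedCentralizer

theorem twistedCentralizer_ne_bot_of_singular {F : Type*} [Field F] {n : ℕ}
    (lam : F) (A : Matrix (Fin n) (Fin n) F) (h : A.det = 0) :
    ∃ B ∈ twistedCentralizer A lam, B ≠ 0 := by
  obtain ⟨B, hB, hAB, hBA⟩ := exists_ne_zero_mul_eq_zero_and_mul_eq_zero h
  exact ⟨B, mem_twistedCentralizer_of_mul_eq_zero lam hAB hBA, hB⟩
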